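/- Let X̃ be the row permutation of X by a uniformly random permutation π of {1,…,N} (X̃_{i,:} := X_{π(i),:}), N ≥ 2, set X̃* := Y P^{-1} Yᵀ X̃, Z̃ := f(X̃; A, Θ), Z̃* := f(X̃*; A*, Θ), let α := max_{m} max_{k,ℓ} (X_{km} − X_{ℓm})² with α > 0, fix t > 0, and define γ := (2/(N−1))·( ‖X‖_F² − (1/N)·‖Xᵀ1‖₂² ) + α t M √N. Then with probability at least 1 − N² · M · exp(−t²/2) over π, ‖Z̃* − Z̃‖_F ≤ τ²ω² · [ (1 + √N)·‖Δ‖_F·‖X‖_F + √γ · Σ_{i=1}^{N} Σ_{j=1}^{N} | [Y P^{-1} Yᵀ]_{ij} − [D̃^{-1} A]_{ij} | ]. -/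

import Mathlib

/-!
The event in fact holds for every permutation. If the claimed probability is positive then
`N² M exp (-t²/2) < 1` forces `t ≥ 1`, so the term `α t M √N` of `γ` alone dominates `α M`,
the largest possible squared distance between two rows of `X` (or of any row permutation of it).

The deterministic bound follows by pushing both perturbations through the two Lipschitz layers.
Removing the cross-class edges `Δ` moves the random-walk matrix by at most `(1 + √N) ‖Δ‖_F`
(removed weight plus renormalisation). The class-mean features are fixed by the idealized
random-walk matrix, and since class means and random walks are both row-stochastic,
`((B - Ã_rw) X̃)ᵢ = ∑ⱼ (Bᵢⱼ - (Ã_rw)ᵢⱼ) (X̃ⱼ - X̃ᵢ)`, in which each row difference is at most `√γ`.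
-/

open Matrix BigOperators Finset

noncomputable def frobNorm {m n : Type*} [Fintype m] [Fintype n] (M : Matrix m n ℝ) : ℝ :=
  Real.sqrt (∑ i, ∑ j, (M i j) ^ 2)

noncomputable def rowNorm {n : Type*} [Fintype n] (v : n → ℝ) : ℝ :=
  Real.sqrt (∑ j, (v j) ^ 2)

noncomputable def specNorm {m n : Type*} [Fintype m] [Fintype n] [DecidableEq n]
    (M : Matrix m n ℝ) : ℝ :=
  ‖LinearMap.toContinuousLinearMap (Matrix.toEuclideanLin M)‖

noncomputable def arw {N : ℕ} (A : Matrix (Fin N) (Fin N) ℝ) : Matrix (Fin N) (Fin N) ℝ :=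
  Matrix.of fun i j => (A + 1) i j / ((∑ k, A i k) + 1)

def astar {N C : ℕ} (A : Matrix (Fin N) (Fin N) ℝ) (y : Fin N → Fin C) :
    Matrix (Fin N) (Fin N) ℝ :=
  Matrix.of fun i j => if y i = y j then A i j else 0

noncomputable def gcn {N M₀ H₁ H : ℕ} (σ1 σ2 : ℝ → ℝ)
    (S : Matrix (Fin N) (Fin N) ℝ) (X : Matrix (Fin N) (Fin M₀) ℝ)
    (Θ1 : Matrix (Fin M₀) (Fin H₁) ℝ) (Θ2 : Matrix (Fin H₁) (Fin H) ℝ) :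
    Matrix (Fin N) (Fin H) ℝ :=
  (S * ((S * X * Θ1).map σ1) * Θ2).map σ2

def oneHot {N C : ℕ} (y : Fin N → Fin C) : Matrix (Fin N) (Fin C) ℝ :=
  Matrix.of fun i c => if y i = c then 1 else 0

lemma nonneg_of_abs_sub_le_mul_abs_sub {τ : ℝ} {σ : ℝ → ℝ}
    (hσ : ∀ a b, |σ a - σ b| ≤ τ * |a - b|) : 0 ≤ τ := by
  simpa using (abs_nonneg _).trans (hσ 1 0)

section Norms

variable {l m n : Type*} [Fintype l] [Fintype m] [Fintype n]

section Frobenius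

attribute [local instance] Matrix.frobeniusNormedAddCommGroup Matrix.frobeniusNormedSpace

lemma frobNorm_eq_norm (M : Matrix m n ℝ) : frobNorm M = ‖M‖ := by
  simp [frobNorm, Matrix.frobenius_norm_def, Real.sqrt_eq_rpow, Real.norm_eq_abs]

lemma frobNorm_nonneg (M : Matrix m n ℝ) : 0 ≤ frobNorm M := Real.sqrt_nonneg _

lemma frobNorm_sq (M : Matrix m n ℝ) : frobNorm M ^ 2 = ∑ i, ∑ j, M i j ^ 2 :=
  Real.sq_sqrt (by positivity)

lemma frobNorm_add_le (P Q : Matrix m n ℝ) : frobNorm (P + Q) ≤ frobNorm P + frobNorm Q := by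
  simpa only [frobNorm_eq_norm] using norm_add_le P Q

lemma frobNorm_mul_le (P : Matrix l m ℝ) (Q : Matrix m n ℝ) :
    frobNorm (P * Q) ≤ frobNorm P * frobNorm Q := by
  simpa only [frobNorm_eq_norm] using Matrix.frobenius_norm_mul P Q

lemma frobNorm_transpose (M : Matrix m n ℝ) : frobNorm Mᵀ = frobNorm M := by
  simpa only [frobNorm_eq_norm] using Matrix.frobenius_norm_transpose M

lemma frobNorm_smul (c : ℝ) (M : Matrix m n ℝ) : frobNorm (c • M) = |c| * frobNorm M := by
  simp only [frobNorm_eq_norm, norm_smul, Real.norm_eq_abs]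

end Frobenius

lemma frobNorm_le_frobNorm_of_abs_le {M E : Matrix m n ℝ} (h : ∀ i j, |M i j| ≤ |E i j|) :
    frobNorm M ≤ frobNorm E :=
  Real.sqrt_le_sqrt <| sum_le_sum fun i _ => sum_le_sum fun j _ => sq_le_sq.2 (h i j)

lemma frobNorm_map_sub_map_le {τ : ℝ} {σ : ℝ → ℝ} (hσ : ∀ a b, |σ a - σ b| ≤ τ * |a - b|)
    (P Q : Matrix m n ℝ) : frobNorm (P.map σ - Q.map σ) ≤ τ * frobNorm (P - Q) := by
  have hτ := nonneg_of_abs_sub_le_mul_abs_sub hσ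
  calc frobNorm (P.map σ - Q.map σ) ≤ frobNorm (τ • (P - Q)) :=
        frobNorm_le_frobNorm_of_abs_le fun i j => by
          simpa [abs_mul, abs_of_nonneg hτ] using hσ (P i j) (Q i j)
    _ = τ * frobNorm (P - Q) := by rw [frobNorm_smul, abs_of_nonneg hτ]

lemma frobNorm_map_le {τ : ℝ} {σ : ℝ → ℝ} (hσ : ∀ a b, |σ a - σ b| ≤ τ * |a - b|)
    (hσ0 : σ 0 = 0) (P : Matrix m n ℝ) : frobNorm (P.map σ) ≤ τ * frobNorm P := by
  simpa [hσ0] using frobNorm_map_sub_map_le hσ P 0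

lemma frobNorm_of_perm_rows (X : Matrix m n ℝ) (e : Equiv.Perm m) :
    frobNorm (Matrix.of fun i j => X (e i) j) = frobNorm X := by
  simp only [frobNorm, Matrix.of_apply]
  rw [Equiv.sum_comp e fun i => ∑ j, X i j ^ 2]

lemma rowNorm_eq_norm (v : n → ℝ) : rowNorm v = ‖WithLp.toLp 2 v‖ := by
  simp [rowNorm, EuclideanSpace.norm_eq, Real.norm_eq_abs]

lemma rowNorm_nonneg (v : n → ℝ) : 0 ≤ rowNorm v := Real.sqrt_nonneg _

lemma rowNorm_sq (v : n → ℝ) : rowNorm v ^ 2 = ∑ j, v j ^ 2 :=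
  Real.sq_sqrt (by positivity)

lemma rowNorm_sum_smul_le {ι : Type*} (s : Finset ι) (c : ι → ℝ) (v : ι → n → ℝ) :
    rowNorm (∑ k ∈ s, c k • v k) ≤ ∑ k ∈ s, |c k| * rowNorm (v k) := by
  simp only [rowNorm_eq_norm, WithLp.toLp_sum, WithLp.toLp_smul]
  refine (norm_sum_le _ _).trans_eq (sum_congr rfl fun k _ => ?_)
  rw [norm_smul, Real.norm_eq_abs]

lemma frobNorm_le_sum_rowNorm (M : Matrix m n ℝ) :
    frobNorm M ≤ ∑ i, rowNorm (fun j => M i j) := by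
  rw [← sq_le_sq₀ (frobNorm_nonneg M) (sum_nonneg fun i _ => rowNorm_nonneg _), frobNorm_sq]
  calc ∑ i, ∑ j, M i j ^ 2 = ∑ i, rowNorm (fun j => M i j) ^ 2 := by simp only [rowNorm_sq]
    _ ≤ (∑ i, rowNorm (fun j => M i j)) ^ 2 :=
        sum_sq_le_sq_sum_of_nonneg fun i _ => rowNorm_nonneg _

lemma rowNorm_sub_le_sqrt {u v : n → ℝ} {α : ℝ}
    (h : ∀ c, (u c - v c) ^ 2 ≤ α) : rowNorm (u - v) ≤ Real.sqrt (Fintype.card n * α) :=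
  Real.sqrt_le_sqrt <| by
    simpa [Pi.sub_apply] using sum_le_sum fun c (_ : c ∈ univ) => h c

lemma one_div_card_mul_rowNorm_sum_sq_le (X : Matrix m n ℝ) :
    1 / Fintype.card m * rowNorm (fun c => ∑ k, X k c) ^ 2 ≤ frobNorm X ^ 2 := by
  rcases isEmpty_or_nonempty m with _ | _
  · simp [frobNorm_sq, rowNorm_sq]
  rw [one_div_mul_eq_div, div_le_iff₀' (by positivity), rowNorm_sq, frobNorm_sq, sum_comm, mul_sum]
  exact sum_le_sum fun c _ => by
    simpa using sq_sum_le_card_mul_sum_sq (s := univ) (f := fun k => X k c)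

lemma rowNorm_mulVec_le [DecidableEq n] (S : Matrix m n ℝ) (v : n → ℝ) :
    rowNorm (S *ᵥ v) ≤ specNorm S * rowNorm v := by
  simpa [rowNorm_eq_norm, specNorm, Matrix.toLpLin_toLp] using
    (LinearMap.toContinuousLinearMap (Matrix.toEuclideanLin S)).le_opNorm (WithLp.toLp 2 v)

lemma specNorm_nonneg [DecidableEq n] (S : Matrix m n ℝ) : 0 ≤ specNorm S := norm_nonneg _

lemma specNorm_transpose [DecidableEq m] [DecidableEq n] (S : Matrix m n ℝ) :
    specNorm Sᵀ = specNorm S := by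
  rw [specNorm, ← Matrix.conjTranspose_eq_transpose_of_trivial,
    Matrix.toEuclideanLin_conjTranspose_eq_adjoint, LinearMap.adjoint_toContinuousLinearMap]
  exact LinearIsometryEquiv.norm_map ContinuousLinearMap.adjoint _

lemma frobNorm_mul_le_specNorm_mul [DecidableEq m] (S : Matrix l m ℝ) (M : Matrix m n ℝ) :
    frobNorm (S * M) ≤ specNorm S * frobNorm M := by
  rw [← frobNorm_transpose M, ← frobNorm_transpose (S * M),
    ← sq_le_sq₀ (frobNorm_nonneg _) (mul_nonneg (specNorm_nonneg S) (frobNorm_nonneg _)),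
    mul_pow, frobNorm_sq, frobNorm_sq, mul_sum]
  refine sum_le_sum fun j _ => ?_
  have hcol : (S * M)ᵀ j = S *ᵥ Mᵀ j := by ext i; rfl
  have := pow_le_pow_left₀ (rowNorm_nonneg _) (rowNorm_mulVec_le S (Mᵀ j)) 2
  rwa [← hcol, mul_pow, rowNorm_sq, rowNorm_sq] at this

lemma frobNorm_mul_le_mul_specNorm [DecidableEq m] [DecidableEq n]
    (M : Matrix l m ℝ) (Θ : Matrix m n ℝ) : frobNorm (M * Θ) ≤ frobNorm M * specNorm Θ := by
  rw [← frobNorm_transpose, Matrix.transpose_mul, ← frobNorm_transpose M, ← specNorm_transpose Θ,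
    mul_comm]
  exact frobNorm_mul_le_specNorm_mul _ _

/-- For matrices `P, Q` with equal row sums, `((P - Q) W)ᵢ = ∑ⱼ (Pᵢⱼ - Qᵢⱼ) (Wⱼ - Wᵢ)`, so only
off-diagonal entries and row differences of `W` enter. -/
lemma frobNorm_sub_mul_le {P Q : Matrix m m ℝ}
    (hPQ : ∀ i, ∑ j, P i j = ∑ j, Q i j) {W : Matrix m n ℝ} {K : ℝ} (hK : 0 ≤ K)
    (hW : ∀ i j, i ≠ j → rowNorm (W j - W i) ≤ K) {E : Matrix m m ℝ} (hE0 : ∀ i j, 0 ≤ E i j)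
    (hE : ∀ i j, i ≠ j → |P i j - Q i j| ≤ E i j) :
    frobNorm ((P - Q) * W) ≤ K * ∑ i, ∑ j, E i j := by
  refine (frobNorm_le_sum_rowNorm _).trans ?_
  rw [mul_sum]
  refine sum_le_sum fun i _ => ?_
  have hrow : (fun c => ((P - Q) * W) i c) = ∑ j, (P - Q) i j • (W j - W i) := by
    have h0 : ∑ j, (P - Q) i j = 0 := by simp [Matrix.sub_apply, sum_sub_distrib, hPQ i]
    ext c
    simp only [Matrix.mul_apply, Finset.sum_apply, Pi.smul_apply, Pi.sub_apply, smul_eq_mul,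
      mul_sub, sum_sub_distrib, ← sum_mul, h0, zero_mul, sub_zero]
  rw [hrow, mul_sum]
  refine (rowNorm_sum_smul_le _ _ _).trans (sum_le_sum fun j _ => ?_)
  by_cases hij : i = j
  · subst hij
    simp [rowNorm, mul_nonneg hK (hE0 i i)]
  · rw [mul_comm K]
    exact mul_le_mul (hE i j hij) (hW i j hij) (rowNorm_nonneg _) (hE0 i j)

end Norms

section GCN

variable {N M₀ H₁ H : ℕ} {σ1 σ2 : ℝ → ℝ} {τ ω : ℝ}
  {Θ1 : Matrix (Fin M₀) (Fin H₁) ℝ} {Θ2 : Matrix (Fin H₁) (Fin H) ℝ}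

lemma frobNorm_layer_le (hσ : ∀ a b, |σ1 a - σ1 b| ≤ τ * |a - b|) (hσ0 : σ1 0 = 0)
    (hΘ : specNorm Θ1 ≤ ω) {S : Matrix (Fin N) (Fin N) ℝ} (hS : specNorm S ≤ 1)
    (X : Matrix (Fin N) (Fin M₀) ℝ) : frobNorm ((S * X * Θ1).map σ1) ≤ τ * ω * frobNorm X := by
  have hτ := nonneg_of_abs_sub_le_mul_abs_sub hσ
  have hX := frobNorm_nonneg X
  have hSX := frobNorm_nonneg (S * X)
  have hS₀ := specNorm_nonneg S
  have hΘ₀ := specNorm_nonneg Θ1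
  calc frobNorm ((S * X * Θ1).map σ1) ≤ τ * (frobNorm (S * X) * specNorm Θ1) :=
        (frobNorm_map_le hσ hσ0 _).trans
          (mul_le_mul_of_nonneg_left (frobNorm_mul_le_mul_specNorm _ _) hτ)
    _ ≤ τ * (1 * frobNorm X * ω) := by
        gcongr
        exact (frobNorm_mul_le_specNorm_mul S X).trans (by gcongr)
    _ = τ * ω * frobNorm X := by ring

lemma frobNorm_layer_sub_layer_le (hσ : ∀ a b, |σ1 a - σ1 b| ≤ τ * |a - b|)
    (hΘ : specNorm Θ1 ≤ ω) (U V : Matrix (Fin N) (Fin M₀) ℝ) :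
    frobNorm ((U * Θ1).map σ1 - (V * Θ1).map σ1) ≤ τ * ω * frobNorm (U - V) := by
  have hτ := nonneg_of_abs_sub_le_mul_abs_sub hσ
  have hUV := frobNorm_nonneg (U - V)
  calc frobNorm ((U * Θ1).map σ1 - (V * Θ1).map σ1) ≤ τ * (frobNorm (U - V) * specNorm Θ1) := by
        refine (frobNorm_map_sub_map_le hσ _ _).trans ?_
        rw [← Matrix.sub_mul]
        gcongr
        exact frobNorm_mul_le_mul_specNorm _ _
    _ ≤ τ * (frobNorm (U - V) * ω) := by gcongr
    _ = τ * ω * frobNorm (U - V) := by ring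

lemma frobNorm_gcn_sub_gcn_le (hσ1 : ∀ a b, |σ1 a - σ1 b| ≤ τ * |a - b|) (hσ10 : σ1 0 = 0)
    (hσ2 : ∀ a b, |σ2 a - σ2 b| ≤ τ * |a - b|) (hΘ1 : specNorm Θ1 ≤ ω) (hΘ2 : specNorm Θ2 ≤ ω)
    {S S' : Matrix (Fin N) (Fin N) ℝ} (hS : specNorm S ≤ 1) (hS' : specNorm S' ≤ 1)
    (X X' : Matrix (Fin N) (Fin M₀) ℝ) :
    frobNorm (gcn σ1 σ2 S' X' Θ1 Θ2 - gcn σ1 σ2 S X Θ1 Θ2) ≤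
      τ ^ 2 * ω ^ 2 * (frobNorm (S' - S) * frobNorm X + frobNorm (S' * X' - S * X)) := by
  have hτ := nonneg_of_abs_sub_le_mul_abs_sub hσ1
  have hω := (specNorm_nonneg Θ1).trans hΘ1
  set F := (S * X * Θ1).map σ1
  set F' := (S' * X' * Θ1).map σ1
  have hF : frobNorm F ≤ τ * ω * frobNorm X := frobNorm_layer_le hσ1 hσ10 hΘ1 hS X
  have hF' : frobNorm (F' - F) ≤ τ * ω * frobNorm (S' * X' - S * X) :=
    frobNorm_layer_sub_layer_le hσ1 hΘ1 _ _
  have hsplit : S' * F' - S * F = (S' - S) * F + S' * (F' - F) := by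
    rw [Matrix.sub_mul, Matrix.mul_sub]; abel
  have hΘ₀ := specNorm_nonneg Θ2
  have hSS := frobNorm_nonneg (S' - S)
  have hFF := frobNorm_nonneg (F' - F)
  have hsum := add_nonneg (mul_nonneg hSS (frobNorm_nonneg F))
    (mul_nonneg (specNorm_nonneg S') hFF)
  calc frobNorm (gcn σ1 σ2 S' X' Θ1 Θ2 - gcn σ1 σ2 S X Θ1 Θ2)
      ≤ τ * (frobNorm (S' * F' - S * F) * specNorm Θ2) := by
        refine (frobNorm_map_sub_map_le hσ2 _ _).trans ?_
        rw [← Matrix.sub_mul]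
        gcongr
        exact frobNorm_mul_le_mul_specNorm _ _
    _ ≤ τ * ((frobNorm (S' - S) * frobNorm F + specNorm S' * frobNorm (F' - F)) * ω) := by
        rw [hsplit]
        gcongr
        exact (frobNorm_add_le _ _).trans
          (add_le_add (frobNorm_mul_le (S' - S) F) (frobNorm_mul_le_specNorm_mul S' (F' - F)))
    _ ≤ τ * ((frobNorm (S' - S) * (τ * ω * frobNorm X) +
          1 * (τ * ω * frobNorm (S' * X' - S * X))) * ω) := by
        gcongr
    _ = τ ^ 2 * ω ^ 2 * (frobNorm (S' - S) * frobNorm X + frobNorm (S' * X' - S * X)) := by ring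

end GCN

section RandomWalk

variable {N : ℕ} {A A' : Matrix (Fin N) (Fin N) ℝ}

lemma arw_apply (A : Matrix (Fin N) (Fin N) ℝ) (i j : Fin N) :
    arw A i j = (A i j + if i = j then 1 else 0) / (∑ k, A i k + 1) := by
  rw [arw, Matrix.of_apply, Matrix.add_apply, Matrix.one_apply]

lemma arw_apply_of_ne (A : Matrix (Fin N) (Fin N) ℝ) {i j : Fin N} (hij : i ≠ j) :
    arw A i j = A i j / (∑ k, A i k + 1) := by
  rw [arw_apply, if_neg hij, add_zero]

lemma arw_nonneg (hA : ∀ i j, 0 ≤ A i j) (i j : Fin N) : 0 ≤ arw A i j := by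
  rw [arw_apply]
  have := hA i j
  have := sum_nonneg fun k (_ : k ∈ univ) => hA i k
  split_ifs <;> positivity

lemma sum_arw_apply (hA : ∀ i j, 0 ≤ A i j) (i : Fin N) : ∑ j, arw A i j = 1 := by
  have hd : ∑ k, A i k + 1 ≠ 0 := by
    linarith [sum_nonneg fun k (_ : k ∈ univ) => hA i k]
  simp only [arw_apply, ← sum_div, sum_add_distrib, sum_ite_eq, mem_univ, if_true]
  exact div_self hd

lemma abs_arw_sub_arw_le (hA' : ∀ i j, 0 ≤ A' i j) (hA'A : ∀ i j, A' i j ≤ A i j) (i j : Fin N) :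
    |arw A' i j - arw A i j| ≤ (A - A') i j + arw A i j * ∑ k, (A - A') i k := by
  set d' := ∑ k, A' i k
  set δ := ∑ k, (A - A') i k
  have hd' : 0 ≤ d' := sum_nonneg fun k _ => hA' i k
  have hδ : 0 ≤ δ := sum_nonneg fun k _ => sub_nonneg.2 (hA'A i k)
  have hΔ : 0 ≤ (A - A') i j := sub_nonneg.2 (hA'A i j)
  have hS : 0 ≤ arw A i j := arw_nonneg (fun k l => (hA' k l).trans (hA'A k l)) i j
  have hd : ∑ k, A i k = d' + δ := by
    simp only [d', δ, Matrix.sub_apply, sum_sub_distrib]; ring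
  have hkey : arw A' i j - arw A i j = (arw A i j * δ - (A - A') i j) / (d' + 1) := by
    have h' : arw A' i j = (A' i j + if i = j then 1 else 0) / (d' + 1) := arw_apply A' i j
    rw [h', arw_apply A, hd, Matrix.sub_apply]
    field_simp
    ring
  rw [hkey, abs_div, abs_of_pos (by positivity : (0 : ℝ) < d' + 1)]
  calc |arw A i j * δ - (A - A') i j| / (d' + 1) ≤ |arw A i j * δ - (A - A') i j| :=
        div_le_self (abs_nonneg _) (by linarith)
    _ ≤ (A - A') i j + arw A i j * δ := by
        rw [abs_le]; constructor <;> nlinarith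

lemma frobNorm_arw_sub_arw_le (hA' : ∀ i j, 0 ≤ A' i j) (hA'A : ∀ i j, A' i j ≤ A i j) :
    frobNorm (arw A' - arw A) ≤ (1 + Real.sqrt N) * frobNorm (A - A') := by
  have hA : ∀ i j, 0 ≤ A i j := fun i j => (hA' i j).trans (hA'A i j)
  set G : Matrix (Fin N) (Fin N) ℝ := Matrix.of fun i j => arw A i j * ∑ k, (A - A') i k
  have hG : frobNorm G ≤ Real.sqrt N * frobNorm (A - A') := by
    rw [← sq_le_sq₀ (frobNorm_nonneg _) (mul_nonneg (Real.sqrt_nonneg _) (frobNorm_nonneg _)),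
      mul_pow, Real.sq_sqrt (by positivity),
      frobNorm_sq, frobNorm_sq, mul_sum]
    refine sum_le_sum fun i _ => ?_
    have hrow : ∑ j, arw A i j ^ 2 ≤ 1 := by
      simpa [sum_arw_apply hA i] using
        sum_sq_le_sq_sum_of_nonneg fun j (_ : j ∈ univ) => arw_nonneg hA i j
    calc ∑ j, G i j ^ 2 = (∑ k, (A - A') i k) ^ 2 * ∑ j, arw A i j ^ 2 := by
          rw [mul_sum]; exact sum_congr rfl fun j _ => by simp only [G, Matrix.of_apply]; ring
      _ ≤ (∑ k, (A - A') i k) ^ 2 * 1 := by gcongr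
      _ ≤ N * ∑ j, (A - A') i j ^ 2 := by
          simpa using sq_sum_le_card_mul_sum_sq (s := univ) (f := fun j => (A - A') i j)
  calc frobNorm (arw A' - arw A) ≤ frobNorm ((A - A') + G) :=
        frobNorm_le_frobNorm_of_abs_le fun i j => by
          have hG0 : 0 ≤ G i j := mul_nonneg (arw_nonneg hA i j)
            (sum_nonneg fun k _ => sub_nonneg.2 (hA'A i k))
          have hΔ : 0 ≤ (A - A') i j := sub_nonneg.2 (hA'A i j)
          rw [Matrix.add_apply, abs_of_nonneg (add_nonneg hΔ hG0)]
          exact abs_arw_sub_arw_le hA' hA'A i j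
    _ ≤ frobNorm (A - A') + Real.sqrt N * frobNorm (A - A') :=
        (frobNorm_add_le _ _).trans (add_le_add_right hG _)
    _ = (1 + Real.sqrt N) * frobNorm (A - A') := by ring

end RandomWalk

section Classes

variable {N C : ℕ} (y : Fin N → Fin C)

noncomputable def classMean : Matrix (Fin N) (Fin N) ℝ :=
  oneHot y * Matrix.diagonal (fun c => (∑ i, oneHot y i c)⁻¹) * (oneHot y)ᵀ

lemma classMean_apply (i j : Fin N) :
    classMean y i j = if y i = y j then ((#{k | y k = y i} : ℕ) : ℝ)⁻¹ else 0 := by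
  simp only [classMean, oneHot, Matrix.mul_apply, Matrix.diagonal_apply]
  split_ifs with h <;> simp [h]

lemma sum_classMean_apply (i : Fin N) : ∑ j, classMean y i j = 1 := by
  have hi : i ∈ ({k | y k = y i} : Finset (Fin N)) := by simp
  simp_rw [classMean_apply, ← sum_filter, sum_const, nsmul_eq_mul, eq_comm (a := y i)]
  exact mul_inv_cancel₀ (Nat.cast_ne_zero.2 (card_ne_zero_of_mem hi))

lemma classMean_mul_apply_of_eq {m : Type*} (W : Matrix (Fin N) m ℝ) {i i' : Fin N}
    (h : y i = y i') (c : m) : (classMean y * W) i c = (classMean y * W) i' c := by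
  simp only [Matrix.mul_apply, classMean_apply, h]

variable {A : Matrix (Fin N) (Fin N) ℝ}

lemma astar_nonneg (hA : ∀ i j, 0 ≤ A i j) (i j : Fin N) : 0 ≤ astar A y i j := by
  rw [astar, Matrix.of_apply]; split_ifs <;> simp [hA i j]

lemma astar_le (hA : ∀ i j, 0 ≤ A i j) (i j : Fin N) : astar A y i j ≤ A i j := by
  rw [astar, Matrix.of_apply]; split_ifs <;> simp [hA i j]

lemma arw_astar_apply_of_ne {i j : Fin N} (h : y i ≠ y j) : arw (astar A y) i j = 0 := by
  rw [arw_apply_of_ne _ (fun hij => h (congrArg y hij)), astar, Matrix.of_apply, if_neg h,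
    zero_div]

/-- `classMean y * W` is constant on classes and `arw (astar A y)` is row-stochastic with no
weight across classes. -/
lemma arw_astar_mul_classMean_mul (hA : ∀ i j, 0 ≤ A i j) {m : Type*}
    (W : Matrix (Fin N) m ℝ) : arw (astar A y) * (classMean y * W) = classMean y * W := by
  ext i c
  rw [Matrix.mul_apply]
  calc ∑ j, arw (astar A y) i j * (classMean y * W) j c
      = ∑ j, arw (astar A y) i j * (classMean y * W) i c := by
        refine sum_congr rfl fun j _ => ?_
        by_cases h : y i = y j
        · rw [classMean_mul_apply_of_eq y W h]
        · rw [arw_astar_apply_of_ne y h, zero_mul, zero_mul]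
    _ = (classMean y * W) i c := by
        rw [← sum_mul, sum_arw_apply (astar_nonneg y hA), one_mul]

end Classes

theorem frobNorm_gcn_classMean_sub_gcn_le {N M₀ H₁ H C : ℕ} {A : Matrix (Fin N) (Fin N) ℝ}
    (hA : ∀ i j, 0 ≤ A i j) (y : Fin N → Fin C) {σ1 σ2 : ℝ → ℝ} {τ ω : ℝ}
    {Θ1 : Matrix (Fin M₀) (Fin H₁) ℝ} {Θ2 : Matrix (Fin H₁) (Fin H) ℝ}
    (hσ1 : ∀ a b, |σ1 a - σ1 b| ≤ τ * |a - b|) (hσ10 : σ1 0 = 0)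
    (hσ2 : ∀ a b, |σ2 a - σ2 b| ≤ τ * |a - b|) (hΘ1 : specNorm Θ1 ≤ ω) (hΘ2 : specNorm Θ2 ≤ ω)
    (hArw : specNorm (arw A) ≤ 1) (hAstarRw : specNorm (arw (astar A y)) ≤ 1)
    {W : Matrix (Fin N) (Fin M₀) ℝ} {K : ℝ} (hK : 0 ≤ K)
    (hW : ∀ i j, i ≠ j → rowNorm (W j - W i) ≤ K) :
    frobNorm (gcn σ1 σ2 (arw (astar A y)) (classMean y * W) Θ1 Θ2 - gcn σ1 σ2 (arw A) W Θ1 Θ2) ≤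
      τ ^ 2 * ω ^ 2 * ((1 + Real.sqrt N) * frobNorm (A - astar A y) * frobNorm W +
        K * ∑ i, ∑ j, |classMean y i j - A i j / (∑ k, A i k + 1)|) := by
  refine (frobNorm_gcn_sub_gcn_le hσ1 hσ10 hσ2 hΘ1 hΘ2 hArw hAstarRw _ _).trans ?_
  rw [arw_astar_mul_classMean_mul y hA, ← Matrix.sub_mul]
  have hW₀ := frobNorm_nonneg W
  gcongr
  · exact frobNorm_arw_sub_arw_le (astar_nonneg y hA) (astar_le y hA)
  · refine frobNorm_sub_mul_le (fun i => by rw [sum_classMean_apply, sum_arw_apply hA]) hK hW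
      (fun i j => abs_nonneg _) fun i j hij => ?_
    rw [arw_apply_of_ne A hij]

lemma sq_sub_le_iSup {m n : Type*} [Finite m] [Finite n] (X : Matrix m n ℝ) (k l : m) (c : n) :
    (X k c - X l c) ^ 2 ≤ ⨆ c' : n, ⨆ k' : m, ⨆ l' : m, (X k' c' - X l' c') ^ 2 :=
  le_ciSup_of_le (Finite.bddAbove_range _) c <| le_ciSup_of_le (Finite.bddAbove_range _) k <|
    le_ciSup (Finite.bddAbove_range fun l' => (X k c - X l' c) ^ 2) l

noncomputable def gcnGamma {N M₀ : ℕ} (X : Matrix (Fin N) (Fin M₀) ℝ) (α t : ℝ) : ℝ :=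
  (2 / ((N : ℝ) - 1)) * (frobNorm X ^ 2 - (1 / N) * rowNorm (fun m => ∑ k, X k m) ^ 2) +
    α * t * M₀ * Real.sqrt N

lemma card_mul_le_gcnGamma {N M₀ : ℕ} (hN : 2 ≤ N) (X : Matrix (Fin N) (Fin M₀) ℝ) {α t : ℝ}
    (hα : 0 ≤ α) (ht : 1 ≤ t) : M₀ * α ≤ gcnGamma X α t := by
  have hN' : (2 : ℝ) ≤ N := by exact_mod_cast hN
  have hvar : 0 ≤ (2 / ((N : ℝ) - 1)) *
      (frobNorm X ^ 2 - (1 / N) * rowNorm (fun m => ∑ k, X k m) ^ 2) :=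
    mul_nonneg (div_nonneg zero_le_two (by linarith)) <| sub_nonneg.2 <| by
      simpa using one_div_card_mul_rowNorm_sum_sq_le X
  have hsqrt : 1 ≤ Real.sqrt N := Real.one_le_sqrt.2 (by linarith)
  have hfluct : α * M₀ * 1 ≤ α * M₀ * (t * Real.sqrt N) :=
    mul_le_mul_of_nonneg_left (by nlinarith) (by positivity)
  rw [gcnGamma]
  nlinarith

lemma one_le_of_sq_mul_exp_lt_one {N M₀ : ℕ} (hN : 2 ≤ N) (hM₀ : 1 ≤ M₀) {t : ℝ} (ht : 0 < t)
    (h : (N : ℝ) ^ 2 * M₀ * Real.exp (-t ^ 2 / 2) < 1) : 1 ≤ t := by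
  have hN' : (2 : ℝ) ≤ N := by exact_mod_cast hN
  have hM₀' : (1 : ℝ) ≤ M₀ := by exact_mod_cast hM₀
  have h4 : 4 * Real.exp (-t ^ 2 / 2) < 1 := by
    have : (4 : ℝ) ≤ N ^ 2 * M₀ := by nlinarith
    nlinarith [Real.exp_pos (-t ^ 2 / 2)]
  by_contra! ht1
  nlinarith [Real.add_one_le_exp (-t ^ 2 / 2)]

theorem perm_gcn_error_probabilistic_general
    {N M₀ H₁ H C : ℕ} (hN : 2 ≤ N)
    (A : Matrix (Fin N) (Fin N) ℝ) (X : Matrix (Fin N) (Fin M₀) ℝ)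
    (y : Fin N → Fin C)
    (σ1 σ2 : ℝ → ℝ) (τ ω : ℝ)
    (Θ1 : Matrix (Fin M₀) (Fin H₁) ℝ) (Θ2 : Matrix (Fin H₁) (Fin H) ℝ)
    (hA : ∀ i j, 0 ≤ A i j)
    (hσ1 : ∀ a b, |σ1 a - σ1 b| ≤ τ * |a - b|) (hσ10 : σ1 0 = 0)
    (hσ2 : ∀ a b, |σ2 a - σ2 b| ≤ τ * |a - b|)
    (hΘ1 : specNorm Θ1 ≤ ω) (hΘ2 : specNorm Θ2 ≤ ω)
    (hArw : specNorm (arw A) ≤ 1)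
    (hAstarRw : specNorm (arw (astar A y)) ≤ 1)
    (α : ℝ)
    (hα : α = ⨆ m : Fin M₀, ⨆ k : Fin N, ⨆ ℓ : Fin N, (X k m - X ℓ m) ^ 2)
    (hαpos : 0 < α)
    (t : ℝ) (ht : 0 < t) :
    let Y : Matrix (Fin N) (Fin C) ℝ := oneHot y
    let p : Fin C → ℝ := fun c => ∑ i, Y i c
    let B : Matrix (Fin N) (Fin N) ℝ := Y * Matrix.diagonal (fun c => (p c)⁻¹) * Yᵀ
    let Δ : Matrix (Fin N) (Fin N) ℝ := A - astar A y
    let d : Fin N → ℝ := fun i => ∑ j, A i j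
    let γ : ℝ := (2 / ((N : ℝ) - 1)) *
        (frobNorm X ^ 2 - (1 / N) * rowNorm (fun m => ∑ k, X k m) ^ 2) +
      α * t * M₀ * Real.sqrt N
    let Xt : Equiv.Perm (Fin N) → Matrix (Fin N) (Fin M₀) ℝ :=
      fun π => Matrix.of fun i m => X (π i) m
    1 - (N : ℝ) ^ 2 * M₀ * Real.exp (-t ^ 2 / 2) ≤
      (Nat.card {π : Equiv.Perm (Fin N) //
          frobNorm (gcn σ1 σ2 (arw (astar A y)) (B * Xt π) Θ1 Θ2 -
              gcn σ1 σ2 (arw A) (Xt π) Θ1 Θ2) ≤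
            τ ^ 2 * ω ^ 2 *
              ((1 + Real.sqrt N) * frobNorm Δ * frobNorm X +
                Real.sqrt γ *
                  ∑ i : Fin N, ∑ j : Fin N, |B i j - A i j / (d i + 1)|)} : ℝ) /
        (Fintype.card (Equiv.Perm (Fin N))) := by
  intro Y p B Δ d γ Xt
  by_cases hprob : 1 - (N : ℝ) ^ 2 * M₀ * Real.exp (-t ^ 2 / 2) ≤ 0
  · exact hprob.trans (by positivity)
  have hM₀ : 1 ≤ M₀ := Nat.one_le_iff_ne_zero.2 fun h => by subst h; simp at hα; linarith
  have ht1 : 1 ≤ t := one_le_of_sq_mul_exp_lt_one hN hM₀ ht (by linarith)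
  have hγ : M₀ * α ≤ γ := card_mul_le_gcnGamma hN X hαpos.le ht1
  have hrows : ∀ (π : Equiv.Perm (Fin N)) i j, i ≠ j → rowNorm (Xt π j - Xt π i) ≤ Real.sqrt γ :=
    fun π i j _ => (rowNorm_sub_le_sqrt fun c => hα ▸ sq_sub_le_iSup X (π j) (π i) c).trans <| by
      simpa using Real.sqrt_le_sqrt hγ
  have hevent : ∀ π : Equiv.Perm (Fin N),
      frobNorm (gcn σ1 σ2 (arw (astar A y)) (B * Xt π) Θ1 Θ2 - gcn σ1 σ2 (arw A) (Xt π) Θ1 Θ2) ≤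
        τ ^ 2 * ω ^ 2 * ((1 + Real.sqrt N) * frobNorm Δ * frobNorm X +
          Real.sqrt γ * ∑ i : Fin N, ∑ j : Fin N, |B i j - A i j / (d i + 1)|) := fun π => by
    rw [← frobNorm_of_perm_rows X π]
    exact frobNorm_gcn_classMean_sub_gcn_le hA y hσ1 hσ10 hσ2 hΘ1 hΘ2 hArw hAstarRw
      (Real.sqrt_nonneg γ) (hrows π)
  rw [Nat.card_congr (Equiv.subtypeUnivEquiv hevent), Nat.card_eq_fintype_card,
    div_self (by positivity)]
  exact sub_le_self _ (by positivity)

/-- Theorem 2 (probability made precise): with probability at least `1 − N²·M·exp(−t²/2)`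
over a uniformly random row permutation `π` of the features, the GCN error bound with
`γ := (2/(N−1))(‖X‖_F² − (1/N)‖Xᵀ1‖₂²) + α t M √N` holds. -/
theorem perm_gcn_error_probabilistic
    {N M₀ H₁ H C : ℕ} (hN : 2 ≤ N)
    (A : Matrix (Fin N) (Fin N) ℝ) (X : Matrix (Fin N) (Fin M₀) ℝ)
    (y : Fin N → Fin C)
    (σ1 σ2 : ℝ → ℝ) (τ ω : ℝ)
    (Θ1 : Matrix (Fin M₀) (Fin H₁) ℝ) (Θ2 : Matrix (Fin H₁) (Fin H) ℝ)
    (hA : ∀ i j, 0 ≤ A i j)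
    (hclass : ∀ c : Fin C, ∃ i, y i = c)
    (hσ1 : ∀ a b, |σ1 a - σ1 b| ≤ τ * |a - b|) (hσ10 : σ1 0 = 0)
    (hσ2 : ∀ a b, |σ2 a - σ2 b| ≤ τ * |a - b|) (hσ20 : σ2 0 = 0)
    (hΘ1 : specNorm Θ1 ≤ ω) (hΘ2 : specNorm Θ2 ≤ ω)
    (hArw : specNorm (arw A) ≤ 1)
    (hAstarRw : specNorm (arw (astar A y)) ≤ 1)
    (α : ℝ)
    (hα : α = ⨆ m : Fin M₀, ⨆ k : Fin N, ⨆ ℓ : Fin N, (X k m - X ℓ m) ^ 2)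
    (hαpos : 0 < α)
    (t : ℝ) (ht : 0 < t) :
    let Y : Matrix (Fin N) (Fin C) ℝ := oneHot y
    let p : Fin C → ℝ := fun c => ∑ i, Y i c
    let B : Matrix (Fin N) (Fin N) ℝ := Y * Matrix.diagonal (fun c => (p c)⁻¹) * Yᵀ
    let Δ : Matrix (Fin N) (Fin N) ℝ := A - astar A y
    let d : Fin N → ℝ := fun i => ∑ j, A i j
    let γ : ℝ := (2 / ((N : ℝ) - 1)) *
        (frobNorm X ^ 2 - (1 / N) * rowNorm (fun m => ∑ k, X k m) ^ 2) +
      α * t * M₀ * Real.sqrt N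
    let Xt : Equiv.Perm (Fin N) → Matrix (Fin N) (Fin M₀) ℝ :=
      fun π => Matrix.of fun i m => X (π i) m
    1 - (N : ℝ) ^ 2 * M₀ * Real.exp (-t ^ 2 / 2) ≤
      (Nat.card {π : Equiv.Perm (Fin N) //
          frobNorm (gcn σ1 σ2 (arw (astar A y)) (B * Xt π) Θ1 Θ2 -
              gcn σ1 σ2 (arw A) (Xt π) Θ1 Θ2) ≤
            τ ^ 2 * ω ^ 2 *
              ((1 + Real.sqrt N) * frobNorm Δ * frobNorm X +
                Real.sqrt γ *
                  ∑ i : Fin N, ∑ j : Fin N, |B i j - A i j / (d i + 1)|)} : ℝ) /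
        (Fintype.card (Equiv.Perm (Fin N))) :=
  perm_gcn_error_probabilistic_general hN A X y σ1 σ2 τ ω Θ1 Θ2 hA hσ1 hσ10 hσ2 hΘ1 hΘ2 hArw
    hAstarRw α hα hαpos t ht
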